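/- arXiv:2603.19767 — 3 statements merged into one kernel-verified Lean document; each statement's English description precedes it below -/
import Mathlib

section
/- Let n ≥ 1, let ℓ₁, …, ℓ_n : ℝ^m → ℝ be affine functions and b₁, …, b_n > 0. Define φ : ℝ^m → ℝ by the implicit equation ∑_{i=1}^n e^{−(ℓ_i(u) + b_i·φ(u))} = 1 (which has a unique solution for each u). Then φ is a convex function on ℝ^m. -/
/-- If `φ` is defined implicitly by `∑ e^{-(ℓᵢ(u) + bᵢ φ(u))} = 1` with `ℓᵢ` affine and
`bᵢ > 0`, then `φ` is convex. -/
theorem stmt6 (m n : ℕ) (hn : 0 < n)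
    (l : Fin n → (EuclideanSpace ℝ (Fin m) →ᵃ[ℝ] ℝ)) (b : Fin n → ℝ)
    (hb : ∀ i, 0 < b i) (φ : EuclideanSpace ℝ (Fin m) → ℝ)
    (hφ : ∀ u, ∑ i, Real.exp (-(l i u + b i * φ u)) = 1) :
    ConvexOn ℝ Set.univ φ := by
  have hne : Nonempty (Fin n) := ⟨⟨0, hn⟩⟩
  refine ⟨convex_univ, fun u _ v _ a c ha hc hac => ?_⟩
  simp only [smul_eq_mul]
  by_contra h
  push_neg at h
  set w := a • u + c • v with hw
  have hsum : ∑ i, Real.exp (-(l i w + b i * (a * φ u + c * φ v))) ≤ 1 := by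
    calc ∑ i, Real.exp (-(l i w + b i * (a * φ u + c * φ v)))
        = ∑ i, Real.exp (a * (-(l i u + b i * φ u)) + c * (-(l i v + b i * φ v))) := by
          refine Finset.sum_congr rfl fun i _ => ?_
          congr 1
          have := Convex.combo_affine_apply (f := l i) (x := u) (y := v) hac
          simp only [smul_eq_mul] at this
          rw [hw, this]
          ring
      _ ≤ ∑ i, (a * Real.exp (-(l i u + b i * φ u)) + c * Real.exp (-(l i v + b i * φ v))) := by
          refine Finset.sum_le_sum fun i _ => ?_
          have := convexOn_exp.2 (Set.mem_univ (-(l i u + b i * φ u)))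
            (Set.mem_univ (-(l i v + b i * φ v))) ha hc hac
          simpa using this
      _ = a * (∑ i, Real.exp (-(l i u + b i * φ u)))
            + c * (∑ i, Real.exp (-(l i v + b i * φ v))) := by
          rw [Finset.sum_add_distrib, Finset.mul_sum, Finset.mul_sum]
      _ = 1 := by rw [hφ u, hφ v]; linarith
  have hlt : ∑ i, Real.exp (-(l i w + b i * φ w))
      < ∑ i, Real.exp (-(l i w + b i * (a * φ u + c * φ v))) := by
    refine Finset.sum_lt_sum_of_nonempty Finset.univ_nonempty fun i _ => ?_
    apply Real.exp_lt_exp.2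
    nlinarith [hb i, h]
  rw [hφ w] at hlt
  linarith
end

section
/- Let n ≥ 2 and q₁, …, q_n ≥ 0 with ∑_{i=1}^n e^{−q_i} = 1. Then min_{1≤i≤n} q_i ≤ (n²/2) · ∑_{i≠j} e^{−(q_i + q_j)}. -/
/-!
Write `x i = e^{-q i}`, a probability vector whose largest entry `x m` sits at the minimiser `m`
of `q`, so `x m ≥ 1/n`. The pairs `(m, j)` and `(j, m)` alone contribute `2 x m (1 - x m)` to
`∑_{i≠j} x i x j`, and `q ≤ e^q - 1` gives `q m · x m ≤ 1 - x m`. Hence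
`q m ≤ n² x m² q m ≤ n² x m (1 - x m) ≤ (n²/2) ∑_{i≠j} x i x j`.
-/

open Finset Real

theorem Finset.two_mul_mul_sum_erase_le_sum_offDiag {ι R : Type*} [DecidableEq ι]
    [CommSemiring R] [PartialOrder R] [IsOrderedRing R] {s : Finset ι} {f : ι → R}
    (hf : ∀ j ∈ s, 0 ≤ f j) {i : ι} (hi : i ∈ s) :
    2 * (f i * ∑ j ∈ s.erase i, f j) ≤ ∑ p ∈ s.offDiag, f p.1 * f p.2 := by
  set t := s.erase i
  have hit : i ∉ t := notMem_erase i s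
  have ht : ∀ j ∈ t, 0 ≤ f j := fun j hj => hf j (mem_of_mem_erase hj)
  rw [← insert_erase hi, offDiag_insert hit]
  calc 2 * (f i * ∑ j ∈ t, f j)
      = ∑ p ∈ {i} ×ˢ t, f p.1 * f p.2 + ∑ p ∈ t ×ˢ {i}, f p.1 * f p.2 := by
        rw [two_mul, sum_product, sum_product, sum_singleton, sum_comm, sum_singleton, mul_sum]
        exact congrArg _ (sum_congr rfl fun j _ => mul_comm (f i) (f j))
    _ ≤ ∑ p ∈ t.offDiag, f p.1 * f p.2 + ∑ p ∈ {i} ×ˢ t, f p.1 * f p.2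
          + ∑ p ∈ t ×ˢ {i}, f p.1 * f p.2 := by
        rw [add_assoc]
        exact le_add_of_nonneg_left <| sum_nonneg fun p hp =>
          mul_nonneg (ht _ (mem_offDiag.1 hp).1) (ht _ (mem_offDiag.1 hp).2.1)
    _ = ∑ p ∈ t.offDiag ∪ {i} ×ˢ t ∪ t ×ˢ {i}, f p.1 * f p.2 := by
        rw [sum_union, sum_union] <;> grind [disjoint_left]

theorem Real.mul_exp_neg_le_one_sub_exp_neg (x : ℝ) : x * exp (-x) ≤ 1 - exp (-x) := by
  have h := mul_le_mul_of_nonneg_right (add_one_le_exp x) (exp_pos (-x)).le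
  rw [← exp_add, add_neg_cancel, exp_zero] at h
  linarith

theorem stmt9_general (n : ℕ) (hne : (Finset.univ : Finset (Fin n)).Nonempty)
    (q : Fin n → ℝ) (hq0 : ∀ i, 0 ≤ q i) (hq : ∑ i, Real.exp (-(q i)) = 1) :
    Finset.univ.inf' hne q ≤
      ((n : ℝ) ^ 2 / 2) *
        ∑ p ∈ (Finset.univ : Finset (Fin n)).offDiag, Real.exp (-(q p.1 + q p.2)) := by
  obtain ⟨m, -, hm⟩ := exists_mem_eq_inf' hne q
  rw [hm]
  set x : Fin n → ℝ := fun i => exp (-q i)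
  have hx_le : ∀ i, x i ≤ x m := fun i =>
    exp_le_exp.2 (neg_le_neg (hm ▸ inf'_le q (mem_univ i)))
  have h_one_le : 1 ≤ n * x m := by
    simpa [x, hq] using sum_le_card_nsmul univ x (x m) fun i _ => hx_le i
  have h_pairs : 2 * (x m * (1 - x m)) ≤ ∑ p ∈ univ.offDiag, exp (-(q p.1 + q p.2)) := by
    have h := two_mul_mul_sum_erase_le_sum_offDiag (f := x) (fun j _ => (exp_pos _).le) (mem_univ m)
    rw [sum_erase_eq_sub (mem_univ m), hq] at h
    simpa only [neg_add, exp_add] using h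
  calc q m ≤ q m * (n * x m) ^ 2 := le_mul_of_one_le_right (hq0 m) (one_le_pow₀ h_one_le)
    _ = n ^ 2 * x m * (q m * x m) := by ring
    _ ≤ n ^ 2 * x m * (1 - x m) := by
        gcongr
        exact mul_exp_neg_le_one_sub_exp_neg (q m)
    _ = n ^ 2 / 2 * (2 * (x m * (1 - x m))) := by ring
    _ ≤ _ := by gcongr

/-- If `qᵢ ≥ 0` and `∑ e^{-qᵢ} = 1` (`n ≥ 2`), then
`min qᵢ ≤ (n²/2) ∑_{i≠j} e^{-(qᵢ+qⱼ)}`. -/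
theorem stmt9 (n : ℕ) (hn : 2 ≤ n) (hne : (Finset.univ : Finset (Fin n)).Nonempty)
    (q : Fin n → ℝ) (hq0 : ∀ i, 0 ≤ q i) (hq : ∑ i, Real.exp (-(q i)) = 1) :
    Finset.univ.inf' hne q ≤
      ((n : ℝ) ^ 2 / 2) *
        ∑ p ∈ (Finset.univ : Finset (Fin n)).offDiag, Real.exp (-(q p.1 + q p.2)) :=
  stmt9_general n hne q hq0 hq
end

section
/- Let n ≥ 1, e₀, e₁, …, e_n ∈ ℝ^N unit vectors with δ := min_i(e_i·e₀) > 0, τ_i ∈ ℝ, c > 0, and Γ_t := {z : min_{1≤i≤n}(z·e_i − c t + τ_i) = 0}. Then Γ_t is nonempty for every t, and dist(Γ_t, Γ_s) ≤ (c/δ)·|t − s| for all t, s ∈ ℝ. -/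
/-!
Along the line `ρ ↦ ρ • e₀` the front function becomes `φ ρ = min_i (ρ ⟪e₀, e i⟫ + τ i)`, which is
continuous and satisfies `φ σ - φ ρ ≥ δ (σ - ρ)` for `ρ ≤ σ`. Hence `φ` is onto, so the line meets
every `Γ_t = {φ = c t}` at some `ρ_t • e₀`, and `|ρ_t - ρ_s| ≤ c |t - s| / δ`.
-/

open Filter Function
open scoped RealInnerProductSpace

section AffineInf

variable {ι : Type*} {s : Finset ι} (hs : s.Nonempty)

lemma Finset.inf'_add (f : ι → ℝ) (a : ℝ) : s.inf' hs f + a = s.inf' hs fun i => f i + a :=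
  map_finset_inf' (OrderIso.addRight a) hs f

lemma Finset.monotone_inf'_mul_add_sub_mul {a : ι → ℝ} (τ : ι → ℝ) {δ : ℝ}
    (ha : ∀ i ∈ s, δ ≤ a i) : Monotone fun ρ => s.inf' hs (fun i => ρ * a i + τ i) - δ * ρ := by
  intro ρ σ hρσ
  dsimp only
  suffices s.inf' hs (fun i => ρ * a i + τ i) + δ * (σ - ρ) ≤ s.inf' hs (fun i => σ * a i + τ i) by
    linarith
  refine Finset.le_inf' hs _ fun i hi => ?_
  have hmin : s.inf' hs (fun i => ρ * a i + τ i) ≤ ρ * a i + τ i := Finset.inf'_le _ hi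
  have hslope : δ * (σ - ρ) ≤ a i * (σ - ρ) :=
    mul_le_mul_of_nonneg_right (ha i hi) (sub_nonneg.2 hρσ)
  linarith

lemma Finset.inf'_inner_smul_sub_add {E : Type*} [NormedAddCommGroup E] [InnerProductSpace ℝ E]
    (u : E) (e : ι → E) (τ : ι → ℝ) (ρ k : ℝ) :
    s.inf' hs (fun i => ⟪ρ • u, e i⟫ - k + τ i) = s.inf' hs (fun i => ρ * ⟪u, e i⟫ + τ i) - k := by
  rw [sub_eq_add_neg _ k, Finset.inf'_add]
  congr 1
  ext i
  rw [real_inner_smul_left]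
  ring

end AffineInf

section ExpandingMap

variable {φ : ℝ → ℝ} {δ : ℝ}

lemma Monotone.surjective_of_sub_mul (hφ : Monotone fun ρ => φ ρ - δ * ρ) (hδ : 0 < δ)
    (hcont : Continuous φ) : Surjective φ := by
  refine hcont.surjective ?_ ?_
  · have hgrow : ∀ᶠ ρ in atTop, φ 0 - δ * 0 ≤ φ ρ - δ * ρ :=
      eventually_ge_atTop 0 |>.mono fun ρ h => hφ h
    simpa using tendsto_atTop_add_left_of_le' atTop _ hgrow (tendsto_id.const_mul_atTop hδ)
  · have hdecay : ∀ᶠ ρ in atBot, φ ρ - δ * ρ ≤ φ 0 - δ * 0 :=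
      eventually_le_atBot 0 |>.mono fun ρ h => hφ h
    simpa using tendsto_atBot_add_left_of_ge' atBot _ hdecay (tendsto_id.const_mul_atBot hδ)

lemma Monotone.mul_abs_sub_le_abs_sub (hφ : Monotone fun ρ => φ ρ - δ * ρ)
    (ρ σ : ℝ) : δ * |ρ - σ| ≤ |φ ρ - φ σ| := by
  wlog h : σ ≤ ρ generalizing ρ σ
  · rw [abs_sub_comm, abs_sub_comm (φ ρ)]
    exact this σ ρ (le_of_not_ge h)
  have hgap : δ * (ρ - σ) ≤ φ ρ - φ σ := by linarith [(hφ h : φ σ - δ * σ ≤ φ ρ - δ * ρ)]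
  rw [abs_of_nonneg (sub_nonneg.2 h)]
  exact hgap.trans (le_abs_self _)

end ExpandingMap

theorem stmt15_general (N n : ℕ) (hne : (Finset.univ : Finset (Fin n)).Nonempty)
    (e₀ : EuclideanSpace ℝ (Fin N)) (he₀ : ‖e₀‖ = 1)
    (e : Fin n → EuclideanSpace ℝ (Fin N))
    (hδ : 0 < Finset.univ.inf' hne (fun i => (inner ℝ (e i) e₀ : ℝ)))
    (τ : Fin n → ℝ) (c : ℝ) (hc : 0 < c) :
    (∀ t : ℝ, ({z : EuclideanSpace ℝ (Fin N) |
        Finset.univ.inf' hne (fun i => (inner ℝ z (e i) : ℝ) - c * t + τ i) = 0}).Nonempty) ∧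
    ∀ t s : ℝ,
      ∃ z ∈ {z : EuclideanSpace ℝ (Fin N) |
          Finset.univ.inf' hne (fun i => (inner ℝ z (e i) : ℝ) - c * t + τ i) = 0},
      ∃ y ∈ {z : EuclideanSpace ℝ (Fin N) |
          Finset.univ.inf' hne (fun i => (inner ℝ z (e i) : ℝ) - c * s + τ i) = 0},
        dist z y ≤ (c / Finset.univ.inf' hne (fun i => (inner ℝ (e i) e₀ : ℝ))) * |t - s| := by
  set δ := Finset.univ.inf' hne (fun i => (inner ℝ (e i) e₀ : ℝ))
  set φ : ℝ → ℝ := fun ρ => Finset.univ.inf' hne (fun i => ρ * ⟪e₀, e i⟫ + τ i)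
  have hφ : Monotone fun ρ => φ ρ - δ * ρ :=
    Finset.monotone_inf'_mul_add_sub_mul hne τ fun i hi => by
      rw [real_inner_comm]; exact Finset.inf'_le _ hi
  have hcont : Continuous φ :=
    Continuous.finset_inf'_apply hne fun i _ => by fun_prop
  obtain ⟨ρ, hρ⟩ := (hφ.surjective_of_sub_mul hδ hcont).hasRightInverse
  have hmem : ∀ t, Finset.univ.inf' hne (fun i => ⟪ρ (c * t) • e₀, e i⟫ - c * t + τ i) = 0 :=
    fun t => by rw [Finset.inf'_inner_smul_sub_add, sub_eq_zero]; exact hρ (c * t)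
  refine ⟨fun t => ⟨_, hmem t⟩, fun t s => ⟨_, hmem t, _, hmem s, ?_⟩⟩
  have hspeed := hφ.mul_abs_sub_le_abs_sub (ρ (c * t)) (ρ (c * s))
  rw [hρ, hρ, ← mul_sub, abs_mul, abs_of_pos hc] at hspeed
  rw [dist_eq_norm, ← sub_smul, norm_smul, he₀, mul_one, Real.norm_eq_abs, div_mul_eq_mul_div,
    le_div_iff₀ hδ, mul_comm]
  exact hspeed

/-- Upper bound on the distance of moving interfaces: each `Γ_t` is nonempty and
`dist(Γ_t, Γ_s) ≤ (c/δ)|t-s|`, witnessed by a pair of points. -/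
theorem stmt15 (N n : ℕ) (hn : 0 < n) (hne : (Finset.univ : Finset (Fin n)).Nonempty)
    (e₀ : EuclideanSpace ℝ (Fin N)) (he₀ : ‖e₀‖ = 1)
    (e : Fin n → EuclideanSpace ℝ (Fin N)) (he : ∀ i, ‖e i‖ = 1)
    (hδ : 0 < Finset.univ.inf' hne (fun i => (inner ℝ (e i) e₀ : ℝ)))
    (τ : Fin n → ℝ) (c : ℝ) (hc : 0 < c) :
    (∀ t : ℝ, ({z : EuclideanSpace ℝ (Fin N) |
        Finset.univ.inf' hne (fun i => (inner ℝ z (e i) : ℝ) - c * t + τ i) = 0}).Nonempty) ∧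
    ∀ t s : ℝ,
      ∃ z ∈ {z : EuclideanSpace ℝ (Fin N) |
          Finset.univ.inf' hne (fun i => (inner ℝ z (e i) : ℝ) - c * t + τ i) = 0},
      ∃ y ∈ {z : EuclideanSpace ℝ (Fin N) |
          Finset.univ.inf' hne (fun i => (inner ℝ z (e i) : ℝ) - c * s + τ i) = 0},
        dist z y ≤ (c / Finset.univ.inf' hne (fun i => (inner ℝ (e i) e₀ : ℝ))) * |t - s| :=
  stmt15_general N n hne e₀ he₀ e hδ τ c hc
end
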